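/- arXiv:1604.02405 — 2 statements merged into one kernel-verified Lean document; each statement's English description precedes it below -/
import Mathlib

section
/- A coarse space (X, E) has game-theoretic coarse property C if and only if as_C X = 0. In particular, if there exists an entourage L for which X admits no uniformly bounded L-disjoint cover, then Player 2 has no winning strategy in the property-C game. -/
open Set
open scoped ENNReal

universe u v

/-- A coarse structure on a set `X`: a collection of entourages closed under
subsets, finite unions, inverses and compositions, containing the diagonal. -/
structure CoarseStructure (X : Type u) where
  IsEnt : Set (X × X) → Prop
  subset_mem : ∀ {E F : Set (X × X)}, IsEnt F → E ⊆ F → IsEnt E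
  union_mem : ∀ {E F : Set (X × X)}, IsEnt E → IsEnt F → IsEnt (E ∪ F)
  diag_mem : IsEnt {p : X × X | p.1 = p.2}
  inv_mem : ∀ {E : Set (X × X)}, IsEnt E → IsEnt {p : X × X | (p.2, p.1) ∈ E}
  comp_mem : ∀ {E F : Set (X × X)}, IsEnt E → IsEnt F →
    IsEnt {p : X × X | ∃ y, (p.1, y) ∈ E ∧ (y, p.2) ∈ F}

variable {X : Type u} {Y : Type v}

/-- Composition of relations. -/
def rcomp (E F : Set (X × X)) : Set (X × X) :=
  {p : X × X | ∃ y, (p.1, y) ∈ E ∧ (y, p.2) ∈ F}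

/-- Iterated composition `E^k`, with `E^0` the diagonal. -/
def rpow (E : Set (X × X)) : ℕ → Set (X × X)
  | 0 => {p : X × X | p.1 = p.2}
  | k + 1 => rcomp (rpow E k) E

/-- A relation is symmetric if it equals its inverse. -/
def SymmRel (E : Set (X × X)) : Prop := ∀ p : X × X, p ∈ E → (p.2, p.1) ∈ E

/-- `Δ_U = ⋃_{A ∈ U} A × A`. -/
def famDiag (U : Set (Set X)) : Set (X × X) := ⋃ A ∈ U, A ×ˢ A

/-- A family of subsets is uniformly bounded if `⋃ A × A` is an entourage. -/
def UnifBdd (C : CoarseStructure X) (U : Set (Set X)) : Prop := C.IsEnt (famDiag U)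

/-- A family of subsets is `L`-disjoint. -/
def LDisj (L : Set (X × X)) (U : Set (Set X)) : Prop :=
  ∀ A ∈ U, ∀ B ∈ U, A ≠ B → (A ×ˢ B) ∩ L = ∅

/-- Coarse property C. -/
def CoarsePropC (C : CoarseStructure X) : Prop :=
  ∀ L : ℕ → Set (X × X), (∀ i, C.IsEnt (L i)) → (∀ i, L i ⊆ L (i + 1)) →
    ∃ n : ℕ, ∃ U : ℕ → Set (Set X),
      (∀ x : X, ∃ i < n, ∃ A ∈ U i, x ∈ A) ∧
      (∀ i < n, UnifBdd C (U i)) ∧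
      (∀ i < n, LDisj (L i) (U i))

/-- Coarse property C for a subspace `S ⊆ X` (with the inherited coarse structure). -/
def CoarsePropCOn (C : CoarseStructure X) (S : Set X) : Prop :=
  ∀ L : ℕ → Set (X × X), (∀ i, C.IsEnt (L i)) → (∀ i, L i ⊆ L (i + 1)) →
    ∃ n : ℕ, ∃ U : ℕ → Set (Set X),
      (∀ i < n, ∀ A ∈ U i, A ⊆ S) ∧
      (∀ x ∈ S, ∃ i < n, ∃ A ∈ U i, x ∈ A) ∧
      (∀ i < n, UnifBdd C (U i)) ∧
      (∀ i < n, LDisj (L i) (U i))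

/-- Coarse asymptotic dimension at most `n`. -/
def CoarseASDimLE (C : CoarseStructure X) (n : ℕ) : Prop :=
  ∀ L : Set (X × X), C.IsEnt L → ∃ U : ℕ → Set (Set X),
    (∀ x : X, ∃ i ≤ n, ∃ A ∈ U i, x ∈ A) ∧
    (∀ i ≤ n, UnifBdd C (U i)) ∧
    (∀ i ≤ n, LDisj L (U i))

/-- The extended natural-valued metric `D(x,y) = min {k : (x,y) ∈ E^k}` induced by `E`. -/
noncomputable def eDist (E : Set (X × X)) (x y : X) : ℕ∞ :=
  sInf ((fun k : ℕ => (k : ℕ∞)) '' {k : ℕ | (x, y) ∈ rpow E k})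

/-- Distance from a point to a set, for the metric induced by `E`. -/
noncomputable def eDistSet (E : Set (X × X)) (x : X) (A : Set X) : ℕ∞ :=
  sInf (eDist E x '' A)

/-- `ℝ≥0∞`-valued version of the metric induced by `E`. -/
noncomputable def nDist (E : Set (X × X)) (x y : X) : ℝ≥0∞ :=
  sInf ((fun k : ℕ => (k : ℝ≥0∞)) '' {k : ℕ | (x, y) ∈ rpow E k})

/-- `ℝ≥0∞`-valued distance from a point to a set. -/
noncomputable def nDistSet (E : Set (X × X)) (x : X) (A : Set X) : ℝ≥0∞ :=
  sInf (nDist E x '' A)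

/-- The map `f × f`. -/
def mapProd (f : X → Y) : X × X → Y × Y := fun p => (f p.1, f p.2)

/-- Bornologous maps: images of entourages are entourages. -/
def Bornologous (CX : CoarseStructure X) (CY : CoarseStructure Y) (f : X → Y) : Prop :=
  ∀ E : Set (X × X), CX.IsEnt E → CY.IsEnt (mapProd f '' E)

/-- Proper maps: preimages of bounded sets are bounded. -/
def ProperCoarse (CX : CoarseStructure X) (CY : CoarseStructure Y) (f : X → Y) : Prop :=
  ∀ B : Set Y, CY.IsEnt (B ×ˢ B) → CX.IsEnt ((f ⁻¹' B) ×ˢ (f ⁻¹' B))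

/-- A coarse map is proper and bornologous. -/
def CoarseMap (CX : CoarseStructure X) (CY : CoarseStructure Y) (f : X → Y) : Prop :=
  ProperCoarse CX CY f ∧ Bornologous CX CY f

/-- A coarsely uniform embedding. -/
def CoarseUnifEmb (CX : CoarseStructure X) (CY : CoarseStructure Y) (f : X → Y) : Prop :=
  ProperCoarse CX CY f ∧ Bornologous CX CY f ∧
    ∀ F : Set (Y × Y), CY.IsEnt F → CX.IsEnt (mapProd f ⁻¹' F)

/-- Two maps are close if the set of pairs of their values is an entourage. -/
def Close (C : CoarseStructure X) (f g : Y → X) : Prop :=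
  C.IsEnt (Set.range fun y => (f y, g y))

/-- Coarse equivalence of coarse spaces. -/
def CoarseEquiv (CX : CoarseStructure X) (CY : CoarseStructure Y) : Prop :=
  ∃ f : X → Y, ∃ g : Y → X, CoarseMap CX CY f ∧ CoarseMap CY CX g ∧
    Close CX (g ∘ f) id ∧ Close CY (f ∘ g) id

/-- A weak `(L,d)`-decomposition of the set `Z` over the family `Y`. -/
def WeakDecomp (L : Set (X × X)) (d : ℕ) (Z : Set X) (Y : Set (Set X)) : Prop :=
  ∃ P : Fin d → Set (Set X), (∀ i, P i ⊆ Y) ∧ (∀ i, LDisj L (P i)) ∧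
    Z = ⋃ i, ⋃ A ∈ P i, A

/-- A family admits a weak `(L,d)`-decomposition over `Y` if each member does. -/
def FamDecomp (L : Set (X × X)) (d : ℕ) (F Y : Set (Set X)) : Prop :=
  ∀ Z ∈ F, WeakDecomp L d Z Y

/-- Straight finite coarse decomposition complexity of a family of subsets. -/
def sFCDC (C : CoarseStructure X) (F : Set (Set X)) : Prop :=
  ∀ L : ℕ → Set (X × X), (∀ i, C.IsEnt (L i)) → (∀ i, L i ⊆ L (i + 1)) →
    ∃ n : ℕ, ∃ Y : ℕ → Set (Set X), Y 0 = F ∧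
      (∀ i < n, FamDecomp (L i) 2 (Y i) (Y (i + 1))) ∧ UnifBdd C (Y n)

/-- Finite weak coarse decomposition complexity (one-step form). -/
def FWCDC (C : CoarseStructure X) : Prop :=
  ∀ L : Set (X × X), C.IsEnt L →
    ∃ d : ℕ, ∃ Y : Set (Set X), UnifBdd C Y ∧ WeakDecomp L d Set.univ Y

/-- `N_L(V, U)`. -/
def NL (L : Set (X × X)) (U : Set (Set X)) (V : Set X) : Set X :=
  V ∪ ⋃ A ∈ {A ∈ U | ((A ×ˢ V) ∩ L).Nonempty}, A

/-- The `L`-saturated union `V ∪_L U`. -/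
def satUnion (L : Set (X × X)) (V U : Set (Set X)) : Set (Set X) :=
  (NL L U '' V) ∪ {A ∈ U | ∀ W ∈ V, (A ×ˢ W) ∩ L = ∅}

/-- The bounded coarse structure of a (pseudo)metric space. -/
def boundedCoarse (X : Type u) [PseudoMetricSpace X] : CoarseStructure X where
  IsEnt E := ∃ R : ℝ, ∀ p ∈ E, dist p.1 p.2 ≤ R
  subset_mem := fun h hsub => ⟨h.choose, fun p hp => h.choose_spec p (hsub hp)⟩
  union_mem := fun hE hF => ⟨max hE.choose hF.choose, by
    rintro p (hp | hp)
    · exact (hE.choose_spec p hp).trans (le_max_left _ _)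
    · exact (hF.choose_spec p hp).trans (le_max_right _ _)⟩
  diag_mem := ⟨0, by
    rintro ⟨a, b⟩ hab
    simp only [Set.mem_setOf_eq] at hab
    simp [hab]⟩
  inv_mem := fun hE => ⟨hE.choose, by
    intro p hp
    rw [dist_comm]
    exact hE.choose_spec _ hp⟩
  comp_mem := fun hE hF => ⟨hE.choose + hF.choose, by
    rintro p ⟨y, h1, h2⟩
    calc dist p.1 p.2 ≤ dist p.1 y + dist y p.2 := dist_triangle _ _ _
      _ ≤ _ := add_le_add (hE.choose_spec _ h1) (hF.choose_spec _ h2)⟩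

/-- Uniformly bounded family of subsets of a metric space. -/
def MUnifBdd {X : Type u} [PseudoMetricSpace X] (U : Set (Set X)) : Prop :=
  ∃ B : ℝ, ∀ A ∈ U, ∀ x ∈ A, ∀ y ∈ A, dist x y ≤ B

/-- `R`-disjoint family of subsets of a metric space. -/
def MDisj {X : Type u} [PseudoMetricSpace X] (R : ℝ) (U : Set (Set X)) : Prop :=
  ∀ A ∈ U, ∀ B ∈ U, A ≠ B → ∀ x ∈ A, ∀ y ∈ B, R < dist x y

/-- Asymptotic property C of a metric space. -/
def AsympPropC (X : Type u) [PseudoMetricSpace X] : Prop :=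
  ∀ R : ℕ → ℝ, (∀ i, 0 < R i) → (∀ i, R i ≤ R (i + 1)) →
    ∃ n : ℕ, ∃ U : ℕ → Set (Set X),
      (∀ x : X, ∃ i < n, ∃ A ∈ U i, x ∈ A) ∧
      (∀ i < n, MUnifBdd (U i)) ∧
      (∀ i < n, MDisj (R i) (U i))

/-- Coercion of pairs in a subspace to pairs in the ambient space. -/
def sprod (S : Set X) : S × S → X × X := fun p => ((p.1 : X), (p.2 : X))

/-- The subspace coarse structure. -/
def CoarseStructure.restrict (C : CoarseStructure X) (S : Set X) : CoarseStructure S where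
  IsEnt E := C.IsEnt (sprod S '' E)
  subset_mem := fun h hsub => C.subset_mem h (Set.image_mono hsub)
  union_mem := fun {E F} h1 h2 => by
    show C.IsEnt (sprod S '' (E ∪ F))
    rw [Set.image_union]; exact C.union_mem h1 h2
  diag_mem := C.subset_mem C.diag_mem (by
    rintro q ⟨p, hp, rfl⟩
    simp only [Set.mem_setOf_eq] at hp ⊢
    exact congrArg Subtype.val hp)
  inv_mem := fun {E} h => C.subset_mem (C.inv_mem h) (by
    rintro q ⟨p, hp, rfl⟩
    exact ⟨(p.2, p.1), hp, rfl⟩)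
  comp_mem := fun {E F} hE hF => C.subset_mem (C.comp_mem hE hF) (by
    rintro q ⟨p, ⟨y, h1, h2⟩, rfl⟩
    exact ⟨(y : X), ⟨(p.1, y), h1, rfl⟩, ⟨(y, p.2), h2, rfl⟩⟩)

/-- First-coordinate projection of a relation on a product. -/
def pfst : (X × Y) × (X × Y) → X × X := fun p => (p.1.1, p.2.1)

/-- Second-coordinate projection of a relation on a product. -/
def psnd : (X × Y) × (X × Y) → Y × Y := fun p => (p.1.2, p.2.2)

/-- The product coarse structure. -/
def prodCoarse (CX : CoarseStructure X) (CY : CoarseStructure Y) :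
    CoarseStructure (X × Y) where
  IsEnt E := CX.IsEnt (pfst '' E) ∧ CY.IsEnt (psnd '' E)
  subset_mem := fun h hsub =>
    ⟨CX.subset_mem h.1 (Set.image_mono hsub), CY.subset_mem h.2 (Set.image_mono hsub)⟩
  union_mem := fun {E F} h1 h2 => by
    constructor
    · show CX.IsEnt (pfst '' (E ∪ F))
      rw [Set.image_union]; exact CX.union_mem h1.1 h2.1
    · show CY.IsEnt (psnd '' (E ∪ F))
      rw [Set.image_union]; exact CY.union_mem h1.2 h2.2
  diag_mem := by
    constructor
    · exact CX.subset_mem CX.diag_mem (by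
        rintro q ⟨p, hp, rfl⟩
        simp only [Set.mem_setOf_eq] at hp ⊢
        exact congrArg Prod.fst hp)
    · exact CY.subset_mem CY.diag_mem (by
        rintro q ⟨p, hp, rfl⟩
        simp only [Set.mem_setOf_eq] at hp ⊢
        exact congrArg Prod.snd hp)
  inv_mem := fun {E} h => by
    constructor
    · exact CX.subset_mem (CX.inv_mem h.1) (by
        rintro q ⟨p, hp, rfl⟩
        exact ⟨(p.2, p.1), hp, rfl⟩)
    · exact CY.subset_mem (CY.inv_mem h.2) (by
        rintro q ⟨p, hp, rfl⟩
        exact ⟨(p.2, p.1), hp, rfl⟩)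
  comp_mem := fun {E F} hE hF => by
    constructor
    · exact CX.subset_mem (CX.comp_mem hE.1 hF.1) (by
        rintro q ⟨p, ⟨y, h1, h2⟩, rfl⟩
        exact ⟨y.1, ⟨(p.1, y), h1, rfl⟩, ⟨(y, p.2), h2, rfl⟩⟩)
    · exact CY.subset_mem (CY.comp_mem hE.2 hF.2) (by
        rintro q ⟨p, ⟨y, h1, h2⟩, rfl⟩
        exact ⟨y.2, ⟨(p.1, y), h1, rfl⟩, ⟨(y, p.2), h2, rfl⟩⟩)

/-- Game-theoretic coarse property C: Player 2 has a winning strategy. -/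
def GamePropC (C : CoarseStructure X) : Prop :=
  ∃ σ : ℕ → (ℕ → Set (X × X)) → Set (Set X),
    (∀ n : ℕ, ∀ L L' : ℕ → Set (X × X), (∀ i ≤ n, L i = L' i) → σ n L = σ n L') ∧
    ∀ L : ℕ → Set (X × X), (∀ i, C.IsEnt (L i)) →
      ∃ k : ℕ, (∀ i ≤ k, UnifBdd C (σ i L) ∧ LDisj (L i) (σ i L)) ∧
        ∀ x : X, ∃ i ≤ k, ∃ A ∈ σ i L, x ∈ A

/-
If `as_C X = 0`, Player 2 wins in one move by answering `L₀` with an `L₀`-disjoint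
uniformly bounded cover. Conversely, let Player 1 open with a symmetric `L₀ ⊇ L` and always answer
a uniformly bounded `Uᵢ` with `Lᵢ₊₁ = Lᵢ ∪ Lᵢ Δ_{Uᵢ} Lᵢ ∪ Lᵢ Δ_{Uᵢ} Lᵢ Δ_{Uᵢ} Lᵢ`. Once Player 2 has
covered `X` with `U₀, …, U_k`, fold the families from the last one backwards by saturated unions:
`W_k = U_k`, `Wᵢ = Wᵢ₊₁ ∪_{Lᵢ} Uᵢ`. Each `Wᵢ` is uniformly bounded and `Lᵢ`-disjoint and covers
`Uᵢ ∪ ⋯ ∪ U_k`, so `W₀` is a single uniformly bounded `L`-disjoint cover of `X`.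
-/

lemma mem_famDiag {U : Set (Set X)} {x y : X} :
    (x, y) ∈ famDiag U ↔ ∃ A ∈ U, x ∈ A ∧ y ∈ A := by
  simp only [famDiag, mem_iUnion, mem_prod, exists_prop]

lemma symmRel_famDiag (U : Set (Set X)) : SymmRel (famDiag U) := by
  rintro ⟨x, y⟩ h
  obtain ⟨A, hA, hx, hy⟩ := mem_famDiag.mp h
  exact mem_famDiag.mpr ⟨A, hA, hy, hx⟩

lemma prod_inter_eq_empty_iff {L : Set (X × X)} {A B : Set X} :
    (A ×ˢ B) ∩ L = ∅ ↔ ∀ x ∈ A, ∀ y ∈ B, (x, y) ∉ L := by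
  simp only [eq_empty_iff_forall_notMem, mem_inter_iff, mem_prod, Prod.forall, not_and, and_imp]
  exact ⟨fun h x hx y hy => h x y hx hy, fun h x y hx hy => h x hx y hy⟩

lemma LDisj.mono {K L : Set (X × X)} {U : Set (Set X)} (hU : LDisj L U) (hKL : K ⊆ L) :
    LDisj K U := fun A hA B hB hAB =>
  subset_eq_empty (inter_subset_inter_right _ hKL) (hU A hA B hB hAB)

lemma coarseASDimLE_zero_iff (C : CoarseStructure X) :
    CoarseASDimLE C 0 ↔ ∀ L, C.IsEnt L →
      ∃ U : Set (Set X), UnifBdd C U ∧ LDisj L U ∧ ∀ x, ∃ A ∈ U, x ∈ A := by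
  constructor
  · intro h L hL
    obtain ⟨U, hcov, hbdd, hdisj⟩ := h L hL
    refine ⟨U 0, hbdd 0 le_rfl, hdisj 0 le_rfl, fun x => ?_⟩
    obtain ⟨i, hi, hx⟩ := hcov x
    exact Nat.le_zero.mp hi ▸ hx
  · intro h L hL
    obtain ⟨U, hbdd, hdisj, hcov⟩ := h L hL
    exact ⟨fun _ => U, fun x => ⟨0, le_rfl, hcov x⟩, fun _ _ => hbdd, fun _ _ => hdisj⟩

def satEntourage (L D : Set (X × X)) : Set (X × X) :=
  L ∪ rcomp (rcomp L D) L ∪ rcomp (rcomp (rcomp (rcomp L D) L) D) L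

lemma isEnt_satEntourage (C : CoarseStructure X) {L D : Set (X × X)} (hL : C.IsEnt L)
    (hD : C.IsEnt D) : C.IsEnt (satEntourage L D) :=
  C.union_mem (C.union_mem hL (C.comp_mem (C.comp_mem hL hD) hL))
    (C.comp_mem (C.comp_mem (C.comp_mem (C.comp_mem hL hD) hL) hD) hL)

lemma SymmRel.satEntourage {L D : Set (X × X)} (hL : SymmRel L) (hD : SymmRel D) :
    SymmRel (satEntourage L D) := by
  rintro ⟨x, y⟩ ((h | ⟨b, ⟨a, h1, h2⟩, h3⟩) | ⟨d, ⟨c, ⟨b, ⟨a, h1, h2⟩, h3⟩, h4⟩, h5⟩)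
  · exact Or.inl (Or.inl (hL _ h))
  · exact Or.inl (Or.inr ⟨a, ⟨b, hL _ h3, hD _ h2⟩, hL _ h1⟩)
  · exact Or.inr ⟨a, ⟨b, ⟨c, ⟨d, hL _ h5, hD _ h4⟩, hL _ h3⟩, hD _ h2⟩, hL _ h1⟩

lemma mem_satEntourage_of_mem_rcomp {L D : Set (X × X)} (hL : SymmRel L) (hD : SymmRel D)
    {x y w w' : X} (hx : x = w ∨ (x, w) ∈ rcomp D L) (hy : y = w' ∨ (y, w') ∈ rcomp D L)
    (hxy : (x, y) ∈ L) : (w, w') ∈ satEntourage L D := by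
  rcases hx with rfl | ⟨a, hxa, haw⟩ <;> rcases hy with rfl | ⟨b, hyb, hbw'⟩
  · exact Or.inl (Or.inl hxy)
  · exact Or.inl (Or.inr ⟨b, ⟨y, hxy, hyb⟩, hbw'⟩)
  · exact Or.inl (Or.inr ⟨x, ⟨a, hL _ haw, hD _ hxa⟩, hxy⟩)
  · exact Or.inr ⟨b, ⟨y, ⟨x, ⟨a, hL _ haw, hD _ hxa⟩, hxy⟩, hyb⟩, hbw'⟩

lemma exists_mem_of_mem_NL {L : Set (X × X)} {U : Set (Set X)} {W : Set X} {x : X}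
    (hx : x ∈ NL L U W) : ∃ w ∈ W, x = w ∨ (x, w) ∈ rcomp (famDiag U) L := by
  rcases hx with hx | hx
  · exact ⟨x, hx, Or.inl rfl⟩
  · obtain ⟨A, ⟨hA, ⟨a, w⟩, ⟨ha, hw⟩, haw⟩, hxA⟩ := mem_iUnion₂.mp hx
    exact ⟨w, hw, Or.inr ⟨a, mem_famDiag.mpr ⟨A, hA, hxA, ha⟩, haw⟩⟩

lemma sUnion_union_subset_sUnion_satUnion (L : Set (X × X)) (V U : Set (Set X)) :
    ⋃₀ V ∪ ⋃₀ U ⊆ ⋃₀ satUnion L V U := by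
  rintro x (⟨W, hW, hx⟩ | ⟨A, hA, hx⟩)
  · exact ⟨NL L U W, Or.inl ⟨W, hW, rfl⟩, Or.inl hx⟩
  · by_cases hAV : ∃ W ∈ V, ((A ×ˢ W) ∩ L).Nonempty
    · obtain ⟨W, hW, hAW⟩ := hAV
      exact ⟨NL L U W, Or.inl ⟨W, hW, rfl⟩, Or.inr (mem_biUnion ⟨hA, hAW⟩ hx)⟩
    · push Not at hAV
      exact ⟨A, Or.inr ⟨hA, hAV⟩, hx⟩

lemma UnifBdd.satUnion (C : CoarseStructure X) {L : Set (X × X)} {V U : Set (Set X)}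
    (hL : C.IsEnt L) (hV : UnifBdd C V) (hU : UnifBdd C U) : UnifBdd C (satUnion L V U) := by
  set M : Set (X × X) := {p | p.1 = p.2} ∪ rcomp (famDiag U) L
  have hM : C.IsEnt M := C.union_mem C.diag_mem (C.comp_mem hU hL)
  refine C.subset_mem (C.union_mem hU (C.comp_mem (C.comp_mem hM hV) (C.inv_mem hM))) ?_
  rintro ⟨x, y⟩ hxy
  obtain ⟨B, hB, hx, hy⟩ := mem_famDiag.mp hxy
  rcases hB with ⟨W, hW, rfl⟩ | ⟨hB, -⟩
  · obtain ⟨w, hw, hxw⟩ := exists_mem_of_mem_NL hx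
    obtain ⟨w', hw', hyw'⟩ := exists_mem_of_mem_NL hy
    exact Or.inr ⟨w', ⟨w, hxw, mem_famDiag.mpr ⟨W, hW, hw, hw'⟩⟩, hyw'⟩
  · exact Or.inl (mem_famDiag.mpr ⟨B, hB, hx, hy⟩)

lemma NL_prod_inter_eq_empty {L : Set (X × X)} (hL : SymmRel L) {V U : Set (Set X)}
    (hU : LDisj L U) {W B : Set X} (hW : W ∈ V) (hB : B ∈ U)
    (hBV : ∀ W' ∈ V, (B ×ˢ W') ∩ L = ∅) : (NL L U W ×ˢ B) ∩ L = ∅ := by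
  have hBW := prod_inter_eq_empty_iff.mp (hBV W hW)
  refine prod_inter_eq_empty_iff.mpr fun x hx y hy hxy => ?_
  rcases hx with hx | hx
  · exact hBW y hy x hx (hL _ hxy)
  · obtain ⟨A, ⟨hA, ⟨a, w⟩, ⟨ha, hw⟩, haw⟩, hxA⟩ := mem_iUnion₂.mp hx
    by_cases hAB : A = B
    · exact hBW a (hAB ▸ ha) w hw haw
    · exact prod_inter_eq_empty_iff.mp (hU A hA B hB hAB) x hxA y hy hxy

lemma LDisj.satUnion {L : Set (X × X)} (hL : SymmRel L) {V U : Set (Set X)}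
    (hV : LDisj (satEntourage L (famDiag U)) V) (hU : LDisj L U) :
    LDisj L (satUnion L V U) := by
  have swap : ∀ {A B : Set X}, (A ×ˢ B) ∩ L = ∅ → (B ×ˢ A) ∩ L = ∅ := fun h =>
    prod_inter_eq_empty_iff.mpr fun x hx y hy hxy =>
      prod_inter_eq_empty_iff.mp h y hy x hx (hL _ hxy)
  rintro _ (⟨W, hW, rfl⟩ | ⟨hA, hAV⟩) _ (⟨W', hW', rfl⟩ | ⟨hB, hBV⟩) hne
  · have hVWW' := prod_inter_eq_empty_iff.mp (hV W hW W' hW' fun h => hne (h ▸ rfl))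
    refine prod_inter_eq_empty_iff.mpr fun x hx y hy hxy => ?_
    obtain ⟨w, hw, hxw⟩ := exists_mem_of_mem_NL hx
    obtain ⟨w', hw', hyw'⟩ := exists_mem_of_mem_NL hy
    exact hVWW' w hw w' hw' (mem_satEntourage_of_mem_rcomp hL (symmRel_famDiag U) hxw hyw' hxy)
  · exact NL_prod_inter_eq_empty hL hU hW hB hBV
  · exact swap (NL_prod_inter_eq_empty hL hU hW' hA hAV)
  · exact hU _ hA _ hB hne

lemma exists_unifBdd_LDisj_of_satEntourage_chain (C : CoarseStructure X)
    (L : ℕ → Set (X × X)) (U : ℕ → Set (Set X)) (k : ℕ) (hL : ∀ i, C.IsEnt (L i))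
    (hLsymm : ∀ i, SymmRel (L i)) (hU : ∀ i ≤ k, UnifBdd C (U i) ∧ LDisj (L i) (U i))
    (hLU : ∀ i < k, L (i + 1) = satEntourage (L i) (famDiag (U i))) :
    ∃ W, UnifBdd C W ∧ LDisj (L 0) W ∧ ∀ i ≤ k, ⋃₀ U i ⊆ ⋃₀ W := by
  induction k generalizing L U with
  | zero =>
    refine ⟨U 0, (hU 0 le_rfl).1, (hU 0 le_rfl).2, fun i hi => ?_⟩
    rw [Nat.le_zero.mp hi]
  | succ k ih =>
    obtain ⟨W, hWbdd, hWdisj, hWcov⟩ := ih (fun i => L (i + 1)) (fun i => U (i + 1))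
      (fun i => hL _) (fun i => hLsymm _) (fun i hi => hU _ (by omega))
      (fun i hi => hLU _ (by omega))
    rw [hLU 0 k.succ_pos] at hWdisj
    refine ⟨satUnion (L 0) W (U 0), hWbdd.satUnion C (hL 0) (hU 0 (Nat.zero_le _)).1,
      hWdisj.satUnion (hLsymm 0) (hU 0 (Nat.zero_le _)).2, fun i hi => ?_⟩
    refine Subset.trans ?_ (sUnion_union_subset_sUnion_satUnion _ _ _)
    rcases i with _ | i
    · exact subset_union_right
    · exact (hWcov i (by omega)).trans subset_union_left

/-- Player 1 answers Player 2's `n`-th move with `next`. Player 2's strategy is fed the moves so far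
padded by `a₀`, which is harmless for strategies whose `n`-th move depends only on `L 0, …, L n`. -/
def strategyPlay {α β : Type*} (σ : ℕ → (ℕ → α) → β) (a₀ : α) (next : α → β → α) : ℕ → α
  | 0 => a₀
  | n + 1 => next (strategyPlay σ a₀ next n)
      (σ n fun i => if i ≤ n then strategyPlay σ a₀ next i else a₀)

lemma exists_play {α β : Type*} (σ : ℕ → (ℕ → α) → β)
    (hσ : ∀ n L L', (∀ i ≤ n, L i = L' i) → σ n L = σ n L') (a₀ : α) (next : α → β → α) :
    ∃ L : ℕ → α, L 0 = a₀ ∧ ∀ n, L (n + 1) = next (L n) (σ n L) := by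
  refine ⟨strategyPlay σ a₀ next, by rw [strategyPlay], fun n => ?_⟩
  rw [strategyPlay, hσ n _ (strategyPlay σ a₀ next) fun i hi => if_pos hi]

lemma gamePropC_of_coarseASDimLE_zero (C : CoarseStructure X) (h : CoarseASDimLE C 0) :
    GamePropC C := by
  have hcover : ∀ L, ∃ U : Set (Set X), C.IsEnt L →
      UnifBdd C U ∧ LDisj L U ∧ ∀ x, ∃ A ∈ U, x ∈ A := fun L => by
    by_cases hL : C.IsEnt L
    · exact ((coarseASDimLE_zero_iff C).mp h L hL).imp fun _ hU _ => hU
    · exact ⟨∅, fun h => absurd h hL⟩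
  choose cover hcover using hcover
  refine ⟨fun n L => cover (L n), fun n L L' hLL' => congrArg cover (hLL' n le_rfl),
    fun L hL => ⟨0, fun i hi => ?_, fun x => ⟨0, le_rfl, (hcover _ (hL 0)).2.2 x⟩⟩⟩
  obtain rfl := Nat.le_zero.mp hi
  exact ⟨(hcover _ (hL 0)).1, (hcover _ (hL 0)).2.1⟩

lemma coarseASDimLE_zero_of_gamePropC (C : CoarseStructure X) (h : GamePropC C) :
    CoarseASDimLE C 0 := by
  obtain ⟨σ, hσ, hwin⟩ := h
  refine (coarseASDimLE_zero_iff C).mpr fun L hL => ?_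
  classical
  obtain ⟨P, hP0, hP⟩ := exists_play σ hσ (L ∪ {p | (p.2, p.1) ∈ L})
    fun E U => if UnifBdd C U then satEntourage E (famDiag U) else E
  have hPent : ∀ n, C.IsEnt (P n) ∧ SymmRel (P n) := by
    intro n
    induction n with
    | zero => exact hP0 ▸ ⟨C.union_mem hL (C.inv_mem hL), fun p hp => hp.symm⟩
    | succ n ih =>
      rw [hP]
      split_ifs with hU
      · exact ⟨isEnt_satEntourage C ih.1 hU, ih.2.satEntourage (symmRel_famDiag _)⟩
      · exact ih
  obtain ⟨k, hk, hcov⟩ := hwin P fun n => (hPent n).1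
  obtain ⟨W, hWbdd, hWdisj, hWcov⟩ := exists_unifBdd_LDisj_of_satEntourage_chain C P
    (fun i => σ i P) k (fun n => (hPent n).1) (fun n => (hPent n).2) hk
    fun i hi => by rw [hP, if_pos (hk i hi.le).1]
  refine ⟨W, hWbdd, hWdisj.mono (hP0 ▸ subset_union_left), fun x => ?_⟩
  obtain ⟨i, hi, A, hA, hx⟩ := hcov x
  exact hWcov i hi ⟨A, hA, hx⟩

/-- game-theoretic coarse property C holds iff the coarse asymptotic
dimension is `0`. -/
theorem stmt18 {X : Type u} (C : CoarseStructure X) :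
    GamePropC C ↔ CoarseASDimLE C 0 :=
  ⟨coarseASDimLE_zero_of_gamePropC C, gamePropC_of_coarseASDimLE_zero C⟩
end

section
/- Let (X, E) be a coarse space with coarse property C. Then X has coarse property A: for every ε > 0 and every symmetric entourage E containing the diagonal, there exists a map a : X → ℓ¹(X), x ↦ a_x, such that ‖a_x‖₁ = 1 for all x, ‖a_x − a_y‖₁ < ε whenever (x,y) ∈ E, and there exists an entourage S with supp(a_x) ⊆ S[x] for all x. -/
open Set
open scoped ENNReal

universe u v

variable {X : Type u} {Y : Type v}

/-!
Fix `N > 4 / ε` and apply property C to the entourages `E^(2 q_i + 1)` with `q_i = N * 2^i`.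
This gives families `U_0, …, U_{k-1}` covering `X`, each `U_i` being `E^(2 q_i + 1)`-disjoint.
For each `i`, put the weight `max 0 (1 - D(x, ⋃ U_i) / q_i)` on a chosen point of the member of
`U_i` within distance `q_i` of `x`. By disjointness, `E`-neighbours see the same member, so the
`i`-th term moves by at most `1 / q_i` along `E`. The sum `b_x` of these terms has norm at least
`1`, since `x` lies in some member, where its weight is `1`. It moves by at most
`∑ 1 / q_i ≤ 2 / N` along `E`, so `b_x / ‖b_x‖` moves by less than `ε`. Its support stays in
the entourage `⋃ Δ_{U_i} ∘ E^{q_i}`.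
-/

section RelationPowers

variable {E : Set (X × X)}

lemma rpow_isEnt (C : CoarseStructure X) (hE : C.IsEnt E) : ∀ m, C.IsEnt (rpow E m)
  | 0 => C.diag_mem
  | m + 1 => C.comp_mem (rpow_isEnt C hE m) hE

lemma mem_rpow_one {x y : X} (h : (x, y) ∈ E) : (x, y) ∈ rpow E 1 :=
  ⟨x, rfl, h⟩

lemma mem_rpow_add {x y z : X} {j : ℕ} :
    ∀ {m : ℕ}, (x, y) ∈ rpow E j → (y, z) ∈ rpow E m → (x, z) ∈ rpow E (j + m)
  | 0, hxy, hyz => (show y = z from hyz) ▸ hxy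
  | _ + 1, hxy, ⟨w, hyw, hwz⟩ => ⟨w, mem_rpow_add hxy hyw, hwz⟩

lemma mem_rpow_self (hrefl : ∀ x, (x, x) ∈ E) : ∀ m (x : X), (x, x) ∈ rpow E m
  | 0, _ => rfl
  | m + 1, x => ⟨x, mem_rpow_self hrefl m x, hrefl x⟩

lemma rpow_mono (hrefl : ∀ x, (x, x) ∈ E) {m m' : ℕ} (h : m ≤ m') :
    rpow E m ⊆ rpow E m' := by
  rintro ⟨x, y⟩ hxy
  simpa only [Nat.add_sub_cancel' h] using mem_rpow_add hxy (mem_rpow_self hrefl (m' - m) y)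

lemma mem_rpow_swap (hsymm : SymmRel E) :
    ∀ m {x y : X}, (x, y) ∈ rpow E m → (y, x) ∈ rpow E m
  | 0, _, _, h => (show _ = _ from h).symm
  | m + 1, _, _, ⟨_, hxw, hwy⟩ => by
    simpa only [Nat.add_comm] using
      mem_rpow_add (mem_rpow_one (hsymm _ hwy)) (mem_rpow_swap hsymm m hxw)

end RelationPowers

lemma CoarseStructure.isEnt_biUnion {ι : Type*} (C : CoarseStructure X) (s : Finset ι)
    {f : ι → Set (X × X)} (hf : ∀ i ∈ s, C.IsEnt (f i)) : C.IsEnt (⋃ i ∈ s, f i) := by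
  classical
  induction s using Finset.induction_on with
  | empty => simpa using C.subset_mem C.diag_mem (empty_subset _)
  | insert i s _ ih =>
    rw [Finset.set_biUnion_insert]
    exact C.union_mem (hf i (s.mem_insert_self i))
      (ih fun j hj => hf j (Finset.mem_insert_of_mem hj))

lemma norm_inv_norm_smul_sub_le {V : Type*} [NormedAddCommGroup V] [NormedSpace ℝ V]
    {u : V} (hu : u ≠ 0) (v : V) :
    ‖‖u‖⁻¹ • u - ‖v‖⁻¹ • v‖ ≤ 2 * ‖u - v‖ / ‖u‖ := by
  have hu' : 0 < ‖u‖ := norm_pos_iff.mpr hu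
  have hdecomp : ‖u‖⁻¹ • u - ‖v‖⁻¹ • v =
      ‖u‖⁻¹ • ((u - v) + (‖v‖ - ‖u‖) • (‖v‖⁻¹ • v)) := by
    rcases eq_or_ne v 0 with rfl | hv
    · simp
    · rw [sub_smul, smul_inv_smul₀ (norm_ne_zero_iff.mpr hv), smul_add, smul_sub, smul_sub,
        smul_smul, inv_mul_cancel₀ hu'.ne', one_smul]
      abel
  have hunit : ‖‖v‖⁻¹ • v‖ ≤ 1 := by
    rw [norm_smul, norm_inv, norm_norm]
    exact inv_mul_le_one_of_le₀ le_rfl (norm_nonneg v)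
  rw [hdecomp, norm_smul, norm_inv, norm_norm, inv_mul_eq_div]
  gcongr
  calc ‖u - v + (‖v‖ - ‖u‖) • (‖v‖⁻¹ • v)‖
      ≤ ‖u - v‖ + |‖v‖ - ‖u‖| * 1 := by
        refine (norm_add_le _ _).trans (add_le_add_right ?_ _)
        rw [norm_smul, Real.norm_eq_abs]
        exact mul_le_mul_of_nonneg_left hunit (abs_nonneg _)
    _ ≤ 2 * ‖u - v‖ := by
        rw [mul_one, abs_sub_comm]
        linarith [abs_norm_sub_norm_le u v]

lemma lp.norm_single_sub_single_le {α : Type*} [DecidableEq α] {c c' : α} {s t : ℝ}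
    (h : s ≠ 0 → t ≠ 0 → c = c') :
    ‖lp.single (E := fun _ : α => ℝ) 1 c s - lp.single 1 c' t‖ ≤ |s - t| := by
  rcases eq_or_ne s 0 with rfl | hs
  · simp [lp.norm_single]
  rcases eq_or_ne t 0 with rfl | ht
  · simp [lp.norm_single]
  rw [h hs ht, ← lp.single_sub, lp.norm_single one_pos, Real.norm_eq_abs]

section Bump

variable (E : Set (X × X)) (U : Set (Set X)) (q : ℕ)

def IsNear (r : ℕ) (x : X) : Prop :=
  ∃ A ∈ U, ∃ a ∈ A, (x, a) ∈ rpow E r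

open Classical in
/-- `max 0 (q - D(x, ⋃ U))` for the metric `D` induced by `E`; the `if` guards against
`sInf ∅ = 0` when `x` is at infinite distance. -/
noncomputable def bump (x : X) : ℕ :=
  if IsNear E U q x then q - sInf {r | IsNear E U r x} else 0

open Classical in
noncomputable def nearMember (x : X) : Set X :=
  if h : IsNear E U q x then h.choose else ∅

noncomputable def nearCenter [Nonempty X] (x : X) : X :=
  Classical.epsilon (· ∈ nearMember E U q x)

open Classical in
noncomputable def bumpVec [Nonempty X] (x : X) : lp (fun _ : X => ℝ) 1 :=
  lp.single 1 (nearCenter E U q x) ((bump E U q x : ℝ) / q)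

variable {E U q} {x y : X}

lemma IsNear.mono (hrefl : ∀ z, (z, z) ∈ E) {r r' : ℕ} (h : IsNear E U r x) (hr : r ≤ r') :
    IsNear E U r' x := by
  obtain ⟨A, hA, a, ha, hxa⟩ := h
  exact ⟨A, hA, a, ha, rpow_mono hrefl hr hxa⟩

lemma bump_le : bump E U q x ≤ q := by
  unfold bump; split <;> omega

lemma isNear_of_bump_ne_zero (h : bump E U q x ≠ 0) : IsNear E U q x := by
  by_contra hn
  exact h (if_neg hn)

lemma bump_eq_of_mem (hrefl : ∀ z, (z, z) ∈ E) {A : Set X} (hA : A ∈ U) (hx : x ∈ A) :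
    bump E U q x = q := by
  have h0 : IsNear E U 0 x := ⟨A, hA, x, hx, rfl⟩
  rw [bump, if_pos (h0.mono hrefl q.zero_le), Nat.eq_zero_of_le_zero (Nat.sInf_le h0)]
  rfl

lemma bump_le_bump_add_one (hrefl : ∀ z, (z, z) ∈ E) (hyx : (y, x) ∈ E) :
    bump E U q x ≤ bump E U q y + 1 := by
  by_cases hx : IsNear E U q x
  swap
  · simp [bump, hx]
  set d := sInf {r | IsNear E U r x}
  rcases le_or_gt q d with hqd | hdq
  · rw [bump, if_pos hx, Nat.sub_eq_zero_of_le hqd]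
    exact Nat.zero_le _
  obtain ⟨A, hA, a, ha, hxa⟩ : IsNear E U d x :=
    Nat.sInf_mem (s := {r | IsNear E U r x}) ⟨q, hx⟩
  have hy : IsNear E U (d + 1) y :=
    ⟨A, hA, a, ha, by simpa only [Nat.add_comm] using mem_rpow_add (mem_rpow_one hyx) hxa⟩
  have hyd : sInf {r | IsNear E U r y} ≤ d + 1 := Nat.sInf_le hy
  rw [bump, bump, if_pos hx, if_pos (hy.mono hrefl hdq)]
  omega

lemma nearMember_spec (h : IsNear E U q x) :
    nearMember E U q x ∈ U ∧ ∃ a ∈ nearMember E U q x, (x, a) ∈ rpow E q := by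
  rw [nearMember, dif_pos h]
  exact h.choose_spec

lemma nearCenter_mem [Nonempty X] (h : IsNear E U q x) :
    nearCenter E U q x ∈ nearMember E U q x :=
  have ⟨_, a, ha, _⟩ := nearMember_spec h
  Classical.epsilon_spec ⟨a, ha⟩

lemma nearMember_eq (hsymm : SymmRel E) (hdisj : LDisj (rpow E (2 * q + 1)) U)
    (hxy : (x, y) ∈ E) (hx : IsNear E U q x) (hy : IsNear E U q y) :
    nearMember E U q x = nearMember E U q y := by
  obtain ⟨hA, a, ha, hxa⟩ := nearMember_spec hx
  obtain ⟨hB, b, hb, hyb⟩ := nearMember_spec hy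
  by_contra hAB
  have hab : (a, b) ∈ rpow E (2 * q + 1) := by
    have := mem_rpow_add (mem_rpow_add (mem_rpow_swap hsymm q hxa) (mem_rpow_one hxy)) hyb
    rwa [show q + 1 + q = 2 * q + 1 by ring] at this
  exact (hdisj _ hA _ hB hAB).subset ⟨mk_mem_prod ha hb, hab⟩

end Bump

section BumpVec

variable [Nonempty X] {E : Set (X × X)} {U : Set (Set X)} {q : ℕ} {x y z : X}

lemma norm_bumpVec_sub_le (hrefl : ∀ z, (z, z) ∈ E) (hsymm : SymmRel E)
    (hdisj : LDisj (rpow E (2 * q + 1)) U) (hxy : (x, y) ∈ E) :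
    ‖bumpVec E U q x - bumpVec E U q y‖ ≤ 1 / q := by
  classical
  refine (lp.norm_single_sub_single_le fun hx hy => ?_).trans ?_
  · have hx' : bump E U q x ≠ 0 := fun h => hx (by simp [h])
    have hy' : bump E U q y ≠ 0 := fun h => hy (by simp [h])
    rw [nearCenter, nearCenter, nearMember_eq hsymm hdisj hxy (isNear_of_bump_ne_zero hx')
      (isNear_of_bump_ne_zero hy')]
  · have hxy' := bump_le_bump_add_one (U := U) (q := q) hrefl (hsymm _ hxy)
    have hyx' := bump_le_bump_add_one (U := U) (q := q) hrefl hxy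
    rw [← sub_div, abs_div, Nat.abs_cast]
    gcongr
    rw [abs_sub_le_iff]
    constructor <;> linarith [(by exact_mod_cast hxy' : (bump E U q x : ℝ) ≤ bump E U q y + 1),
      (by exact_mod_cast hyx' : (bump E U q y : ℝ) ≤ bump E U q x + 1)]

lemma bumpVec_apply_nonneg : 0 ≤ bumpVec E U q x z := by
  classical
  rw [bumpVec, lp.single_apply, Pi.single_apply]
  split <;> positivity

lemma bumpVec_apply_nearCenter_of_mem (hrefl : ∀ z, (z, z) ∈ E) (hq : q ≠ 0) {A : Set X}
    (hA : A ∈ U) (hx : x ∈ A) : bumpVec E U q x (nearCenter E U q x) = 1 := by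
  classical
  rw [bumpVec, lp.single_apply_self, bump_eq_of_mem hrefl hA hx, div_self (Nat.cast_ne_zero.2 hq)]

lemma mem_of_bumpVec_apply_ne_zero (hsymm : SymmRel E) (h : bumpVec E U q x z ≠ 0) :
    (z, x) ∈ rcomp (famDiag U) (rpow E q) := by
  classical
  have hz : z = nearCenter E U q x := by
    by_contra hz
    exact h (lp.single_apply_ne _ _ _ hz)
  have hbump : bump E U q x ≠ 0 := by
    intro h0
    apply h
    rw [hz, bumpVec, lp.single_apply_self, h0, Nat.cast_zero, zero_div]
  have hnear := isNear_of_bump_ne_zero hbump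
  obtain ⟨hW, a, ha, hxa⟩ := nearMember_spec hnear
  exact ⟨a, mem_biUnion hW (mk_mem_prod (hz ▸ nearCenter_mem hnear) ha),
    mem_rpow_swap hsymm q hxa⟩

end BumpVec

section BumpSum

variable [Nonempty X] {E : Set (X × X)} {U : ℕ → Set (Set X)} {Q : ℕ → ℕ} {k : ℕ}
  {x y z : X}

variable (E U Q k) in
noncomputable def bumpSum (x : X) : lp (fun _ : X => ℝ) 1 :=
  ∑ i ∈ Finset.range k, bumpVec E (U i) (Q i) x

lemma bumpSum_apply :
    bumpSum E U Q k x z = ∑ i ∈ Finset.range k, bumpVec E (U i) (Q i) x z := by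
  rw [bumpSum, lp.coeFn_sum, Finset.sum_apply]

lemma one_le_norm_bumpSum (hrefl : ∀ z, (z, z) ∈ E) {i : ℕ} (hi : i < k) (hQ : Q i ≠ 0)
    {A : Set X} (hA : A ∈ U i) (hx : x ∈ A) : 1 ≤ ‖bumpSum E U Q k x‖ := by
  set c := nearCenter E (U i) (Q i) x
  calc 1 = bumpVec E (U i) (Q i) x c := (bumpVec_apply_nearCenter_of_mem hrefl hQ hA hx).symm
    _ ≤ bumpSum E U Q k x c := by
      rw [bumpSum_apply]
      exact Finset.single_le_sum (fun j _ => bumpVec_apply_nonneg) (Finset.mem_range.2 hi)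
    _ ≤ ‖bumpSum E U Q k x‖ :=
      (Real.le_norm_self _).trans (lp.norm_apply_le_norm one_ne_zero _ c)

lemma norm_bumpSum_sub_le (hrefl : ∀ z, (z, z) ∈ E) (hsymm : SymmRel E)
    (hdisj : ∀ i < k, LDisj (rpow E (2 * Q i + 1)) (U i)) (hxy : (x, y) ∈ E) :
    ‖bumpSum E U Q k x - bumpSum E U Q k y‖ ≤ ∑ i ∈ Finset.range k, 1 / (Q i : ℝ) := by
  rw [bumpSum, bumpSum, ← Finset.sum_sub_distrib]
  exact (norm_sum_le _ _).trans (Finset.sum_le_sum fun i hi =>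
    norm_bumpVec_sub_le hrefl hsymm (hdisj i (Finset.mem_range.1 hi)) hxy)

lemma mem_of_bumpSum_apply_ne_zero (hsymm : SymmRel E) (h : bumpSum E U Q k x z ≠ 0) :
    (z, x) ∈ ⋃ i ∈ Finset.range k, rcomp (famDiag (U i)) (rpow E (Q i)) := by
  rw [bumpSum_apply] at h
  obtain ⟨i, hi, hne⟩ := Finset.exists_ne_zero_of_sum_ne_zero h
  exact mem_biUnion hi (mem_of_bumpVec_apply_ne_zero hsymm hne)

end BumpSum

lemma sum_range_inv_mul_two_pow_le (N k : ℕ) :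
    ∑ i ∈ Finset.range k, 1 / ((N * 2 ^ i : ℕ) : ℝ) ≤ 2 / N := by
  calc ∑ i ∈ Finset.range k, 1 / ((N * 2 ^ i : ℕ) : ℝ)
      = 1 / N * ∑ i ∈ Finset.range k, (1 / 2 : ℝ) ^ i := by
        rw [Finset.mul_sum]
        refine Finset.sum_congr rfl fun i _ => ?_
        push_cast
        rw [div_pow, one_pow, div_mul_div_comm, one_mul]
    _ ≤ 1 / N * 2 := by gcongr; exact sum_geometric_two_le k
    _ = 2 / N := by ring

lemma exists_normalized_of_norm_sub_le {E S : Set (X × X)} (b : X → lp (fun _ : X => ℝ) 1)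
    {δ ε : ℝ} (hb : ∀ x, 1 ≤ ‖b x‖)
    (hbE : ∀ x y, (x, y) ∈ E → ‖b x - b y‖ ≤ δ)
    (hδ : 2 * δ < ε) (hbS : ∀ x y, b x y ≠ 0 → (y, x) ∈ S) :
    ∃ a : X → lp (fun _ : X => ℝ) 1, (∀ x, ‖a x‖ = 1) ∧
      (∀ x y, (x, y) ∈ E → ‖a x - a y‖ < ε) ∧
      ∀ x y, a x y ≠ 0 → (y, x) ∈ S := by
  have hb0 : ∀ x, b x ≠ 0 := fun x => norm_pos_iff.mp (zero_lt_one.trans_le (hb x))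
  refine ⟨fun x => ‖b x‖⁻¹ • b x, fun x => norm_smul_inv_norm (hb0 x), fun x y hxy => ?_,
    fun x y hy => hbS x y fun h => hy (by simp [h])⟩
  calc ‖‖b x‖⁻¹ • b x - ‖b y‖⁻¹ • b y‖ ≤ 2 * ‖b x - b y‖ / ‖b x‖ :=
        norm_inv_norm_smul_sub_le (hb0 x) _
    _ ≤ 2 * ‖b x - b y‖ := div_le_self (by positivity) (hb x)
    _ < ε := by linarith [hbE x y hxy]

/-- coarse property C implies coarse property A. -/
theorem stmt19 {X : Type u} (C : CoarseStructure X) (h : CoarsePropC C) :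
    ∀ ε : ℝ, 0 < ε → ∀ E : Set (X × X), C.IsEnt E → SymmRel E →
      (∀ x : X, (x, x) ∈ E) →
      ∃ a : X → lp (fun _ : X => ℝ) 1,
        (∀ x : X, ‖a x‖ = 1) ∧
        (∀ x y : X, (x, y) ∈ E → ‖a x - a y‖ < ε) ∧
        ∃ S : Set (X × X), C.IsEnt S ∧
          ∀ x y : X, (a x : ∀ _ : X, ℝ) y ≠ 0 → (y, x) ∈ S := by
  intro ε hε E hE hsymm hrefl
  rcases isEmpty_or_nonempty X with hX | hX
  · exact ⟨isEmptyElim, isEmptyElim, fun x => isEmptyElim x, E, hE, fun x => isEmptyElim x⟩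
  obtain ⟨N, hN⟩ := exists_nat_gt (4 / ε)
  have hN0 : (0 : ℝ) < N := (div_pos four_pos hε).trans hN
  set Q : ℕ → ℕ := fun i => N * 2 ^ i
  have hQ0 : ∀ i, Q i ≠ 0 := fun i => mul_ne_zero (by exact_mod_cast hN0.ne') (by positivity)
  have hQmono : ∀ i, Q i ≤ Q (i + 1) := fun i =>
    Nat.mul_le_mul_left N (Nat.pow_le_pow_right two_pos i.le_succ)
  obtain ⟨k, U, hcov, hbdd, hdisj⟩ := h (fun i => rpow E (2 * Q i + 1))
    (fun i => rpow_isEnt C hE _) (fun i => rpow_mono hrefl (by linarith [hQmono i]))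
  have hδ : 2 * (2 / N : ℝ) < ε := by
    rw [div_lt_iff₀ hε] at hN
    rw [← mul_div_assoc, div_lt_iff₀ hN0]
    linarith
  obtain ⟨a, ha, haE, haS⟩ := exists_normalized_of_norm_sub_le (bumpSum E U Q k)
    (fun x => have ⟨i, hi, A, hA, hx⟩ := hcov x; one_le_norm_bumpSum hrefl hi (hQ0 i) hA hx)
    (fun x y hxy => (norm_bumpSum_sub_le hrefl hsymm hdisj hxy).trans
      (sum_range_inv_mul_two_pow_le N k))
    hδ (fun x y hy => mem_of_bumpSum_apply_ne_zero hsymm hy)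
  exact ⟨a, ha, haE, _, C.isEnt_biUnion _ fun i hi =>
    C.comp_mem (hbdd i (Finset.mem_range.1 hi)) (rpow_isEnt C hE _), haS⟩
end
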